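/- arXiv:2503.18643 — 4 statements merged into one kernel-verified Lean document; each statement's English description precedes it below -/
import Mathlib

section
/- Let A be a commutative ring with the trivial norm, and let x be a multiplicative seminorm on A with x(a) ≤ 1 for all a. Then x(a+b) ≤ max(x(a), x(b)) for all a,b ∈ A; i.e. every bounded multiplicative seminorm on a trivially normed ring is non-Archimedean. -/
/-!
Expanding `(a + b) ^ n` by the binomial theorem and bounding each of the `n + 1` terms gives
`x (a + b) ^ n ≤ (n + 1) * max (x a) (x b) ^ n`; the binomial coefficients cost nothing since
`x` is at most `1` on the image of `ℕ`. As `n + 1` grows slower than `r ^ n` for any `r > 1`,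
this forces `x (a + b) ≤ max (x a) (x b)`.
-/

open Finset

theorem le_of_forall_pow_le_succ_mul_pow {c M : ℝ} (hM : 0 ≤ M)
    (h : ∀ n : ℕ, c ^ n ≤ (n + 1) * M ^ n) : c ≤ M := by
  by_contra! hlt
  rcases hM.eq_or_lt with rfl | hM
  · linarith [h 1]
  · obtain ⟨n, hn⟩ := Real.exists_natCast_add_one_lt_pow_of_one_lt ((one_lt_div hM).2 hlt)
    rw [div_pow, lt_div_iff₀ (pow_pos hM n)] at hn
    exact (h n).not_gt hn

section MultiplicativeSeminorm

variable {A : Type*} [CommSemiring A] {x : A → ℝ}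

theorem pow_map_add_le_succ_mul_max_pow (hnn : ∀ a, 0 ≤ x a) (h0 : x 0 = 0) (h1 : x 1 = 1)
    (hmul : ∀ a b, x (a * b) = x a * x b) (hadd : ∀ a b, x (a + b) ≤ x a + x b)
    (hnat : ∀ n : ℕ, x n ≤ 1) (a b : A) (n : ℕ) :
    x (a + b) ^ n ≤ (n + 1) * max (x a) (x b) ^ n := by
  set M := max (x a) (x b)
  have hpow (c : A) (k : ℕ) : x (c ^ k) = x c ^ k := map_pow (⟨⟨x, h1⟩, hmul⟩ : A →* ℝ) c k
  have hterm : ∀ i ∈ range (n + 1), x (a ^ i * b ^ (n - i) * n.choose i) ≤ M ^ n := by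
    intro i hi
    rw [hmul, hmul, hpow, hpow, ← pow_mul_pow_sub M (Nat.le_of_lt_succ (mem_range.1 hi)),
      ← mul_one (_ * M ^ (n - i))]
    have := hnn a
    have := hnn b
    gcongr
    exacts [hnn _, le_max_left _ _, le_max_right _ _, hnat _]
  calc x (a + b) ^ n = x ((a + b) ^ n) := (hpow _ _).symm
    _ ≤ ∑ i ∈ range (n + 1), x (a ^ i * b ^ (n - i) * n.choose i) := by
      rw [add_pow]
      exact le_sum_of_subadditive x h0.le hadd _ _
    _ ≤ ∑ _i ∈ range (n + 1), M ^ n := sum_le_sum hterm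
    _ = (n + 1) * M ^ n := by simp

theorem isNonarchimedean_of_map_natCast_le_one (hnn : ∀ a, 0 ≤ x a) (h0 : x 0 = 0)
    (h1 : x 1 = 1) (hmul : ∀ a b, x (a * b) = x a * x b)
    (hadd : ∀ a b, x (a + b) ≤ x a + x b) (hnat : ∀ n : ℕ, x n ≤ 1) :
    IsNonarchimedean x := fun a b =>
  le_of_forall_pow_le_succ_mul_pow (le_max_of_le_left (hnn a))
    (pow_map_add_le_succ_mul_max_pow hnn h0 h1 hmul hadd hnat a b)

end MultiplicativeSeminorm

/-- Every multiplicative seminorm on a trivially normed commutative ring that is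
bounded by the trivial norm is non-Archimedean:
`x(a+b) ≤ max(x a, x b)`. -/
theorem stmt10 {A : Type*} [CommRing A] (x : A → ℝ)
    (hnn : ∀ a : A, 0 ≤ x a)
    (h0 : x 0 = 0) (h1 : x 1 = 1)
    (hmul : ∀ a b : A, x (a * b) = x a * x b)
    (hadd : ∀ a b : A, x (a + b) ≤ x a + x b)
    (hbd : ∀ a : A, x a ≤ 1) :
    ∀ a b : A, x (a + b) ≤ max (x a) (x b) :=
  isNonarchimedean_of_map_natCast_le_one hnn h0 h1 hmul hadd fun n => hbd n
end

section
/- Consider the affine line over a field k, with the trivially valued field k₀. For r > 0, let η_r be the seminorm on k[T] given by η_r(Σ aᵢTⁱ) = max_i (|aᵢ|₀ · rⁱ). Then η_r is a multiplicative seminorm (in fact an absolute value) on k[T] bounded by the trivial absolute value on k, and for P ≠ 0: η_r(P) = r^{deg P} if r > 1, and η_r(P) = r^{v_T(P)} if 0 < r < 1, where v_T(P) is the T-adic valuation of P. -/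
/-!
`η_r(P)` is the largest `rⁱ` with `i` in the support of `P`. As `i ↦ rⁱ` is monotone for
`r ≥ 1` and antitone for `r ≤ 1`, this maximum is attained at the degree, resp. at the `T`-adic
valuation of `P`, and both are additive under multiplication, so `η_r` is multiplicative. Since
`supp (P + Q) ⊆ supp P ∪ supp Q`, `η_r` is even ultrametric.
-/

open Classical in
/-- The trivial absolute value on a field: `0 ↦ 0`, nonzero `↦ 1`. -/
noncomputable def trivAbs {k : Type*} [Field k] (a : k) : ℝ := if a = 0 then 0 else 1

open Classical in
/-- The Gauss-type point `η_r` on `k[T]` over the trivially valued field: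
`η_r(Σ aᵢ Tⁱ) = max_i |aᵢ|₀ rⁱ`, i.e. the maximum of `rⁱ` over the support. -/
noncomputable def eta {k : Type*} [Field k] (r : ℝ) (P : Polynomial k) : ℝ :=
  if h : P = 0 then 0
  else P.support.sup' (Polynomial.nonempty_support_iff.mpr h) (fun i => r ^ i)

open Polynomial

section Eta

variable {k : Type*} [Field k] {r : ℝ}

@[simp]
lemma eta_zero : eta r (0 : k[X]) = 0 := by
  simp [_root_.eta]

lemma pow_le_eta_of_mem_support {P : k[X]} {i : ℕ} (hi : i ∈ P.support) :
    r ^ i ≤ eta r P := by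
  have hP : P ≠ 0 := by rintro rfl; simp at hi
  rw [_root_.eta, dif_neg hP]
  exact Finset.le_sup' _ hi

lemma eta_le_of_forall_mem_support {P : k[X]} (hP : P ≠ 0) {c : ℝ}
    (h : ∀ i ∈ P.support, r ^ i ≤ c) : eta r P ≤ c := by
  rw [_root_.eta, dif_neg hP]
  exact Finset.sup'_le _ _ h

lemma eta_eq_pow_natDegree (hr : 1 ≤ r) {P : k[X]} (hP : P ≠ 0) :
    eta r P = r ^ P.natDegree :=
  le_antisymm
    (eta_le_of_forall_mem_support hP fun i hi =>
      pow_le_pow_right₀ hr (le_natDegree_of_mem_supp i hi))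
    (pow_le_eta_of_mem_support (natDegree_mem_support_of_nonzero hP))

lemma eta_eq_pow_natTrailingDegree (hr₀ : 0 ≤ r) (hr₁ : r ≤ 1) {P : k[X]} (hP : P ≠ 0) :
    eta r P = r ^ P.natTrailingDegree :=
  le_antisymm
    (eta_le_of_forall_mem_support hP fun i hi =>
      pow_le_pow_of_le_one hr₀ hr₁ (natTrailingDegree_le_of_mem_supp i hi))
    (pow_le_eta_of_mem_support (natTrailingDegree_mem_support_of_nonzero hP))

lemma eta_nonneg (hr : 0 ≤ r) (P : k[X]) : 0 ≤ eta r P := by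
  rcases eq_or_ne P 0 with rfl | hP
  · exact eta_zero.ge
  · exact (pow_nonneg hr _).trans (pow_le_eta_of_mem_support (natDegree_mem_support_of_nonzero hP))

lemma eta_pos (hr : 0 < r) {P : k[X]} (hP : P ≠ 0) : 0 < eta r P :=
  (pow_pos hr _).trans_le (pow_le_eta_of_mem_support (natDegree_mem_support_of_nonzero hP))

lemma eta_eq_zero_iff (hr : 0 < r) {P : k[X]} : eta r P = 0 ↔ P = 0 :=
  ⟨fun h => by_contra fun hP => (eta_pos hr hP).ne' h, fun h => h ▸ eta_zero⟩

lemma eta_C_of_ne_zero {a : k} (ha : a ≠ 0) : eta r (C a) = 1 := by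
  rw [_root_.eta, dif_neg (C_ne_zero.mpr ha)]
  simp [support_C ha]

@[simp]
lemma eta_one : eta r (1 : k[X]) = 1 := by
  simpa using eta_C_of_ne_zero (r := r) (one_ne_zero : (1 : k) ≠ 0)

lemma eta_C_le_trivAbs (a : k) : eta r (C a) ≤ trivAbs a := by
  rcases eq_or_ne a 0 with rfl | ha
  · simp [trivAbs]
  · simp [eta_C_of_ne_zero ha, trivAbs, ha]

lemma eta_mul (hr : 0 ≤ r) (P Q : k[X]) : eta r (P * Q) = eta r P * eta r Q := by
  rcases eq_or_ne P 0 with rfl | hP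
  · simp
  rcases eq_or_ne Q 0 with rfl | hQ
  · simp
  have hPQ : P * Q ≠ 0 := mul_ne_zero hP hQ
  rcases le_total 1 r with h | h
  · rw [eta_eq_pow_natDegree h hPQ, eta_eq_pow_natDegree h hP, eta_eq_pow_natDegree h hQ,
      natDegree_mul hP hQ, pow_add]
  · rw [eta_eq_pow_natTrailingDegree hr h hPQ, eta_eq_pow_natTrailingDegree hr h hP,
      eta_eq_pow_natTrailingDegree hr h hQ, natTrailingDegree_mul hP hQ, pow_add]

lemma eta_add_le_max (hr : 0 ≤ r) (P Q : k[X]) : eta r (P + Q) ≤ max (eta r P) (eta r Q) := by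
  rcases eq_or_ne (P + Q) 0 with hPQ | hPQ
  · rw [hPQ, eta_zero]
    exact le_max_of_le_left (eta_nonneg hr P)
  refine eta_le_of_forall_mem_support hPQ fun i hi => ?_
  rcases Finset.mem_union.mp (support_add hi) with hi | hi
  · exact le_max_of_le_left (pow_le_eta_of_mem_support hi)
  · exact le_max_of_le_right (pow_le_eta_of_mem_support hi)

end Eta

/-- `η_r` is a multiplicative seminorm (in fact an absolute value) on `k[T]`
bounded by the trivial absolute value on `k`, and for `P ≠ 0` one has
`η_r(P) = r^{deg P}` if `r > 1` and `η_r(P) = r^{v_T(P)}` if `0 < r < 1`. -/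
theorem stmt11 {k : Type*} [Field k] (r : ℝ) (hr : 0 < r) :
    eta r (0 : Polynomial k) = 0 ∧ eta r (1 : Polynomial k) = 1 ∧
    (∀ P Q : Polynomial k, eta r (P * Q) = eta r P * eta r Q) ∧
    (∀ P Q : Polynomial k, eta r (P + Q) ≤ eta r P + eta r Q) ∧
    (∀ a : k, eta r (Polynomial.C a) ≤ trivAbs a) ∧
    (∀ P : Polynomial k, eta r P = 0 ↔ P = 0) ∧
    (∀ P : Polynomial k, P ≠ 0 → 1 < r → eta r P = r ^ P.natDegree) ∧
    (∀ P : Polynomial k, P ≠ 0 → r < 1 → eta r P = r ^ P.natTrailingDegree) :=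
  ⟨eta_zero, eta_one, eta_mul hr.le,
    fun P Q => (eta_add_le_max hr.le P Q).trans
      (max_le_add_of_nonneg (eta_nonneg hr.le P) (eta_nonneg hr.le Q)),
    eta_C_le_trivAbs, fun _ => eta_eq_zero_iff hr,
    fun _ hP h1 => eta_eq_pow_natDegree h1.le hP,
    fun _ hP h1 => eta_eq_pow_natTrailingDegree hr.le h1.le hP⟩
end

section
/- The set of multiplicative seminorms x on k[T] bounded by the trivial absolute value on k with x(T) > 1 is exactly {η_r : r > 1}, where η_r(Σ aᵢTⁱ) = max_i(|aᵢ|₀ rⁱ). In other words, a bounded multiplicative seminorm on k[T] over the trivially valued field k satisfying x(T) > 1 is determined by its value on T: x(P) = x(T)^{deg P} for every nonzero polynomial P. -/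
open Polynomial

lemma le_of_forall_pow_le_succ_mul_pow_s12 {a b : ℝ} (hb : 0 ≤ b)
    (h : ∀ m : ℕ, a ^ m ≤ (m + 1) * b ^ m) : a ≤ b := by
  by_contra! hba
  rcases hb.eq_or_lt with rfl | hb
  · linarith [h 1]
  obtain ⟨m, hm⟩ := Real.exists_natCast_add_one_lt_pow_of_one_lt ((one_lt_div hb).mpr hba)
  rw [div_pow, lt_div_iff₀ (by positivity)] at hm
  exact (h m).not_gt hm

namespace MulRingSeminorm

/-- The binomial expansion gives `f (a + b) ^ m ≤ (m + 1) * max (f a) (f b) ^ m`, and taking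
`m`-th roots as `m → ∞` removes the factor `m + 1`. -/
theorem isNonarchimedean_of_forall_natCast_le_one {R : Type*} [CommRing R]
    (f : MulRingSeminorm R) (h : ∀ n : ℕ, f n ≤ 1) : IsNonarchimedean f := by
  intro a b
  set M := max (f a) (f b)
  refine le_of_forall_pow_le_succ_mul_pow_s12 (le_max_of_le_left (apply_nonneg f a)) fun m => ?_
  have hterm (i : ℕ) (hi : i ∈ Finset.range (m + 1)) :
      f (a ^ i * b ^ (m - i) * (m.choose i : R)) ≤ M ^ m := by
    have him : i ≤ m := Nat.lt_succ_iff.mp (Finset.mem_range.mp hi)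
    calc f (a ^ i * b ^ (m - i) * (m.choose i : R))
        = f a ^ i * f b ^ (m - i) * f (m.choose i : R) := by rw [map_mul, map_mul, map_pow, map_pow]
      _ ≤ M ^ i * M ^ (m - i) * 1 := by
        gcongr
        exacts [le_max_left _ _, le_max_right _ _, h _]
      _ = M ^ m := by rw [mul_one, ← pow_add, Nat.add_sub_cancel' him]
  calc f (a + b) ^ m = f (∑ i ∈ Finset.range (m + 1), a ^ i * b ^ (m - i) * (m.choose i : R)) := by
        rw [← map_pow, add_pow]
    _ ≤ ∑ i ∈ Finset.range (m + 1), f (a ^ i * b ^ (m - i) * (m.choose i : R)) :=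
        Finset.le_sum_of_subadditive f (map_zero f).le (map_add_le_add f) _ _
    _ ≤ ∑ _i ∈ Finset.range (m + 1), M ^ m := Finset.sum_le_sum hterm
    _ = (m + 1) * M ^ m := by simp

variable {k : Type*} [Field k] (f : MulRingSeminorm k[X])

lemma apply_C_eq_one (hbd : ∀ a : k, f (C a) ≤ 1) {a : k} (ha : a ≠ 0) : f (C a) = 1 := by
  have hinv : f (C a) * f (C a⁻¹) = 1 := by
    rw [← map_mul, ← C_mul, mul_inv_cancel₀ ha, C_1, map_one]
  refine le_antisymm (hbd a) ?_
  calc 1 = f (C a) * f (C a⁻¹) := hinv.symm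
    _ ≤ f (C a) * 1 := by gcongr; exact hbd _
    _ = f (C a) := mul_one _

lemma apply_C_mul_X_pow (hbd : ∀ a : k, f (C a) ≤ 1) {a : k} (ha : a ≠ 0) (n : ℕ) :
    f (C a * X ^ n) = f X ^ n := by
  rw [map_mul, map_pow, apply_C_eq_one f hbd ha, one_mul]

/-- Since `f X > 1`, the monomials of `P` have pairwise distinct values and the leading one
dominates; the ultrametric inequality then makes it the value of the whole sum. -/
theorem apply_eq_apply_X_pow_natDegree (hbd : ∀ a : k, f (C a) ≤ 1) (hX : 1 < f X)
    {P : k[X]} (hP : P ≠ 0) : f P = f X ^ P.natDegree := by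
  have hna : IsNonarchimedean f :=
    isNonarchimedean_of_forall_natCast_le_one f fun n => by rw [← map_natCast C]; exact hbd _
  have hmono (i : ℕ) (hi : i ∈ P.support) : f (C (P.coeff i) * X ^ i) = f X ^ i :=
    apply_C_mul_X_pow f hbd (mem_support_iff.mp hi) i
  have hlead := natDegree_mem_support_of_nonzero hP
  conv_lhs => rw [P.as_sum_support_C_mul_X_pow]
  rw [hna.apply_sum_eq_of_lt (fun Q => (map_neg_eq_map f Q).symm) hlead, hmono _ hlead]
  intro j hj hne
  rw [hmono j hj, hmono _ hlead]
  exact pow_lt_pow_right₀ hX ((le_natDegree_of_mem_supp j hj).lt_of_ne hne)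

end MulRingSeminorm

/-- A multiplicative seminorm `x` on `k[T]`, bounded by the trivial absolute
value on `k` and with `x(T) > 1`, is determined by its value on `T`:
`x(P) = x(T)^{deg P}` for every nonzero `P`.  These are exactly the points
`η_r` with `r > 1` forming the valuative boundary of the affine line. -/
theorem stmt12 {k : Type*} [Field k] (x : Polynomial k → ℝ)
    (hnn : ∀ P, 0 ≤ x P)
    (h0 : x 0 = 0) (h1 : x 1 = 1)
    (hmul : ∀ P Q : Polynomial k, x (P * Q) = x P * x Q)
    (hadd : ∀ P Q : Polynomial k, x (P + Q) ≤ x P + x Q)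
    (hbd : ∀ a : k, x (Polynomial.C a) ≤ 1)
    (hX : 1 < x Polynomial.X) :
    ∀ P : Polynomial k, P ≠ 0 → x P = x Polynomial.X ^ P.natDegree := by
  have hneg_one : x (-1) = 1 := by
    have hsq : x (-1) * x (-1) = 1 := by rw [← hmul, neg_one_mul, neg_neg, h1]
    nlinarith [hnn (-1)]
  let f : MulRingSeminorm k[X] :=
    { toFun := x
      map_zero' := h0
      add_le' := hadd
      neg' := fun P => by rw [neg_eq_neg_one_mul, hmul, hneg_one, one_mul]
      map_one' := h1
      map_mul' := hmul }
  exact fun P hP => f.apply_eq_apply_X_pow_natDegree hbd hX hP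
end

section
/- Let k be a field and x a non-Archimedean multiplicative seminorm on k[T] with x(a) ≤ 1 for all a ∈ k and 0 < x(T) < 1, whose kernel is zero (x is an absolute value on k[T]) and which has no center in 𝔾_m, meaning x(P) < 1 for all P in the ideal (T). Then x(P) = x(T)^{v_T(P)} for every nonzero P ∈ k[T], i.e. x = η_r with r = x(T) ∈ (0,1). -/
/-!
Write `P = T^v Q` with `v = v_T(P)` and `T ∤ Q`, so `Q = a + T R` with `a ∈ kˣ`.
Since `x ≤ 1` on `k` and `x(a) x(a⁻¹) = 1`, we get `x(a) = 1`, while `x(T R) < 1` because `x`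
has no center in `𝔾ₘ`; the strict ultrametric inequality gives `x(Q) = 1`, hence
`x(P) = x(T)^v`.
-/

open Polynomial

theorem apply_add_eq_of_lt {R : Type*} [AddGroup R] (f : R → ℝ)
    (hadd : ∀ a b : R, f (a + b) ≤ max (f a) (f b)) {a b : R}
    (hb : f b < f a) (hnb : f (-b) < f a) : f (a + b) = f a := by
  refine le_antisymm ((hadd a b).trans (max_le le_rfl hb.le)) ?_
  have h := hadd (a + b) (-b)
  rw [add_neg_cancel_right] at h
  exact le_of_not_gt fun hlt => (max_lt hlt hnb).not_ge h

theorem eq_one_of_mul_eq_one_of_le_one {s t : ℝ} (hs : 0 ≤ s) (hst : s * t = 1)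
    (hs1 : s ≤ 1) (ht1 : t ≤ 1) : s = 1 := by
  nlinarith

theorem Polynomial.apply_eq_one_of_not_X_dvd {k : Type*} [Field k] (x : k[X] → ℝ)
    (hnn : ∀ P, 0 ≤ x P) (h1 : x 1 = 1) (hmul : ∀ P Q : k[X], x (P * Q) = x P * x Q)
    (hadd : ∀ P Q : k[X], x (P + Q) ≤ max (x P) (x Q)) (hbd : ∀ a : k, x (C a) ≤ 1)
    (hcen : ∀ P ∈ Ideal.span {(X : k[X])}, x P < 1) {Q : k[X]} (hQ : ¬ X ∣ Q) : x Q = 1 := by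
  set a := Q.coeff 0
  have ha : a ≠ 0 := fun h => hQ (X_dvd_iff.mpr h)
  have hCa : x (C a) = 1 := by
    refine eq_one_of_mul_eq_one_of_le_one (hnn _) ?_ (hbd a) (hbd a⁻¹)
    rw [← hmul, ← C_mul, mul_inv_cancel₀ ha, C_1, h1]
  have hmem : X * Q.divX ∈ Ideal.span {(X : k[X])} :=
    Ideal.mul_mem_right _ _ (Ideal.mem_span_singleton_self X)
  rw [← X_mul_divX_add Q, add_comm, apply_add_eq_of_lt x hadd, hCa] <;> rw [hCa]
  exacts [hcen _ hmem, hcen _ (neg_mem hmem)]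

theorem stmt13_general {k : Type*} [Field k] (x : Polynomial k → ℝ)
    (hnn : ∀ P, 0 ≤ x P)
    (h1 : x 1 = 1)
    (hmul : ∀ P Q : Polynomial k, x (P * Q) = x P * x Q)
    (hadd : ∀ P Q : Polynomial k, x (P + Q) ≤ max (x P) (x Q))
    (hbd : ∀ a : k, x (Polynomial.C a) ≤ 1)
    (hcen : ∀ P ∈ Ideal.span {(Polynomial.X : Polynomial k)}, x P < 1) :
    ∀ P : Polynomial k, P ≠ 0 → x P = x Polynomial.X ^ P.natTrailingDegree := by
  intro P hP
  obtain ⟨Q, hPQ, hQ⟩ := exists_eq_pow_rootMultiplicity_mul_and_not_dvd P hP 0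
  rw [C_0, sub_zero] at hPQ hQ
  rw [rootMultiplicity_eq_natTrailingDegree'] at hPQ
  have hpow : ∀ n, x (X ^ n) = x X ^ n := map_pow (⟨⟨x, h1⟩, hmul⟩ : k[X] →* ℝ) X
  calc x P = x (X ^ P.natTrailingDegree) * x Q := by rw [← hmul, ← hPQ]
    _ = x X ^ P.natTrailingDegree := by
      rw [hpow, apply_eq_one_of_not_X_dvd x hnn h1 hmul hadd hbd hcen hQ, mul_one]

/-- A non-Archimedean multiplicative absolute value `x` on `k[T]`, bounded by
the trivial absolute value on `k`, with `0 < x(T) < 1`, with zero kernel, and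
with no center on `𝔾ₘ` (i.e. `x < 1` on the ideal `(T)`), satisfies
`x(P) = x(T)^{v_T(P)}` for every nonzero `P`; i.e. `x = η_r` with
`r = x(T) ∈ (0,1)`. -/
theorem stmt13 {k : Type*} [Field k] (x : Polynomial k → ℝ)
    (hnn : ∀ P, 0 ≤ x P)
    (h0 : x 0 = 0) (h1 : x 1 = 1)
    (hmul : ∀ P Q : Polynomial k, x (P * Q) = x P * x Q)
    (hadd : ∀ P Q : Polynomial k, x (P + Q) ≤ max (x P) (x Q))
    (hbd : ∀ a : k, x (Polynomial.C a) ≤ 1)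
    (hker : ∀ P : Polynomial k, P ≠ 0 → x P ≠ 0)
    (hX0 : 0 < x Polynomial.X) (hX1 : x Polynomial.X < 1)
    (hcen : ∀ P ∈ Ideal.span {(Polynomial.X : Polynomial k)}, x P < 1) :
    ∀ P : Polynomial k, P ≠ 0 → x P = x Polynomial.X ^ P.natTrailingDegree :=
  stmt13_general x hnn h1 hmul hadd hbd hcen
end
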